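/- arXiv:2506.20188 — 2 statements merged into one kernel-verified Lean document; each statement's English description precedes it below -/
import Mathlib

section
/- With the same setup, the set {P φ_i : i ∈ S} is linearly independent and spans U^⊥; in particular it is a basis of U^⊥, so dim U^⊥ = |S|. -/
/-!
Let `L = (l i)_{i ∈ S} : V → ℝ^S`, so that `U = ker L`. Since `v - P v ∈ Uᗮᗮ = U`, we have
`L (P φ i) = L (φ i) = e i` by biorthogonality, and `L` is injective on `Uᗮ` because
`U ⊓ Uᗮ = ⊥`. Hence `L` restricts to an isomorphism `Uᗮ ≃ ℝ^S` carrying `P φ i` to `e i`.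
-/

open Submodule

namespace LinearMap

variable {𝕜 E F ι : Type*} [RCLike 𝕜] [NormedAddCommGroup E] [InnerProductSpace 𝕜 E]
  [AddCommGroup F] [Module 𝕜 F] {L : E →ₗ[𝕜] F}

theorem injective_domRestrict_ker_orthogonal : Function.Injective (L.domRestrict (ker L)ᗮ) := by
  rw [← ker_eq_bot, ker_eq_bot']
  rintro ⟨x, hx⟩ hLx
  have hx' : x ∈ ker L ⊓ (ker L)ᗮ := ⟨hLx, hx⟩
  rw [inf_orthogonal_eq_bot, mem_bot] at hx'
  exact Subtype.ext hx'

variable [(ker L).HasOrthogonalProjection]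

theorem apply_orthogonalProjectionOnto_ker_orthogonal (x : E) :
    L ((ker L)ᗮ.orthogonalProjectionOnto x) = L x := by
  rw [coe_orthogonalProjectionOnto_apply, starProjection_orthogonal_val, map_sub,
    mem_ker.mp (starProjection_apply_mem _ x), sub_zero]

noncomputable def basisKerOrthogonal (b : Module.Basis ι 𝕜 F) (w : ι → E)
    (hw : ∀ i, L (w i) = b i) : Module.Basis ι 𝕜 (ker L)ᗮ :=
  b.map (LinearEquiv.ofBijective (L.domRestrict (ker L)ᗮ)
    ⟨injective_domRestrict_ker_orthogonal, by
      rw [← range_eq_top, eq_top_iff, ← b.span_eq, span_le]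
      rintro _ ⟨i, rfl⟩
      exact ⟨(ker L)ᗮ.orthogonalProjectionOnto (w i), by
        rw [domRestrict_apply, apply_orthogonalProjectionOnto_ker_orthogonal, hw]⟩⟩).symm

theorem basisKerOrthogonal_apply (b : Module.Basis ι 𝕜 F) (w : ι → E)
    (hw : ∀ i, L (w i) = b i) (i : ι) :
    basisKerOrthogonal b w hw i = (ker L)ᗮ.orthogonalProjectionOnto (w i) := by
  rw [basisKerOrthogonal, Module.Basis.map_apply, LinearEquiv.symm_apply_eq]
  exact ((apply_orthogonalProjectionOnto_ker_orthogonal (w i)).trans (hw i)).symm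

end LinearMap

theorem Module.Basis.span_range_subtype_comp {R M ι : Type*} [Semiring R] [AddCommMonoid M]
    [Module R M] {p : Submodule R M} (B : Module.Basis ι R p) :
    Submodule.span R (Set.range (p.subtype ∘ B)) = p := by
  rw [Set.range_comp, Submodule.span_image, B.span_eq, Submodule.map_subtype_top]

theorem projected_basis_is_basis
    (V : Type*) [NormedAddCommGroup V] [InnerProductSpace ℝ V]
    [FiniteDimensional ℝ V]
    (n : ℕ) (φ : Module.Basis (Fin n) ℝ V) (l : Fin n → Module.Dual ℝ V)
    (hbio : ∀ i j, l i (φ j) = if i = j then (1 : ℝ) else 0)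
    (S : Finset (Fin n))
    (U : Submodule ℝ V) (hU : U = ⨅ i ∈ S, LinearMap.ker (l i)) :
    LinearIndependent ℝ (fun i : S => (Submodule.orthogonalProjectionOnto Uᗮ (φ i) : V)) ∧
      Submodule.span ℝ (Set.range (fun i : S => (Submodule.orthogonalProjectionOnto Uᗮ (φ i) : V))) = Uᗮ ∧
      Module.finrank ℝ Uᗮ = S.card := by
  let L : V →ₗ[ℝ] S → ℝ := LinearMap.pi fun i : S => l i
  have hUL : U = LinearMap.ker L := by
    rw [hU, LinearMap.ker_pi, iInf_subtype']
  have hLφ : ∀ i : S, L (φ i) = Pi.basisFun ℝ S i := by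
    intro i
    ext j
    rw [LinearMap.pi_apply, hbio, Pi.basisFun_apply, Pi.single_apply]
    exact if_congr Subtype.ext_iff.symm rfl rfl
  subst hUL
  set B := LinearMap.basisKerOrthogonal (Pi.basisFun ℝ S) (fun i : S => φ i) hLφ
  have hB : (fun i : S => ((LinearMap.ker L)ᗮ.orthogonalProjectionOnto (φ i) : V)) =
      (LinearMap.ker L)ᗮ.subtype ∘ B :=
    funext fun i => congrArg Subtype.val (LinearMap.basisKerOrthogonal_apply _ _ hLφ i).symm
  refine ⟨?_, ?_, ?_⟩
  · rw [hB]
    exact B.linearIndependent.map' _ (Submodule.ker_subtype _)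
  · rw [hB, B.span_range_subtype_comp]
  · rw [Module.finrank_eq_card_basis B, Fintype.card_coe]
end

section
/- The pyramid Lagrange space P^{pyr,Lag}_k := span{ x^{p_0} y^{p_1} z^{p_2} / (1-z)^{min(p_0,p_1)} : p_0 + p_2 ≤ k, p_1 + p_2 ≤ k } is a subspace of the natural pyramid rationomial space P^pyr_k := span{ x^{p_0} y^{p_1} z^{p_2} / (1-z)^{p_0+p_1} : p_0, p_1, p_2 ≤ k }, as spaces of functions on the open reference pyramid {(x,y,z) : 0 ≤ x, 0 ≤ y, 0 ≤ z < 1, x+z ≤ 1, y+z ≤ 1}. -/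
/-- The open reference pyramid (with apex excluded, `z < 1`). -/
def refPyramid : Set (ℝ × ℝ × ℝ) :=
  {v | 0 ≤ v.1 ∧ 0 ≤ v.2.1 ∧ 0 ≤ v.2.2 ∧ v.2.2 < 1 ∧ v.1 + v.2.2 ≤ 1 ∧ v.2.1 + v.2.2 ≤ 1}

/-- The natural pyramid rationomial space of degree `k`, as a space of functions on the
open reference pyramid. -/
noncomputable def pyramidNatural (k : ℕ) : Submodule ℝ (refPyramid → ℝ) :=
  Submodule.span ℝ
    {f | ∃ p₀ p₁ p₂ : ℕ, p₀ ≤ k ∧ p₁ ≤ k ∧ p₂ ≤ k ∧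
      f = fun v : refPyramid =>
        (v : ℝ × ℝ × ℝ).1 ^ p₀ * (v : ℝ × ℝ × ℝ).2.1 ^ p₁ * (v : ℝ × ℝ × ℝ).2.2 ^ p₂ /
          (1 - (v : ℝ × ℝ × ℝ).2.2) ^ (p₀ + p₁)}

/-- The span of the degree-`k` pyramid Lagrange element, as a space of functions on the
open reference pyramid. -/
noncomputable def pyramidLagrange (k : ℕ) : Submodule ℝ (refPyramid → ℝ) :=
  Submodule.span ℝ
    {f | ∃ p₀ p₁ p₂ : ℕ, p₀ + p₂ ≤ k ∧ p₁ + p₂ ≤ k ∧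
      f = fun v : refPyramid =>
        (v : ℝ × ℝ × ℝ).1 ^ p₀ * (v : ℝ × ℝ × ℝ).2.1 ^ p₁ * (v : ℝ × ℝ × ℝ).2.2 ^ p₂ /
          (1 - (v : ℝ × ℝ × ℝ).2.2) ^ (min p₀ p₁)}

/-!
On the pyramid `z < 1`, the Lagrange generator with exponents `(p₀, p₁, p₂)` is the natural
generator `x^p₀ y^p₁ z^p₂ / (1 - z)^(p₀ + p₁)` times `(1 - z)^(max p₀ p₁)`, since
`min + max = p₀ + p₁`. Multiplying a natural generator by `1 - z` subtracts the generator with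
`p₂` raised by one, so `(1 - z)^j` times a natural generator stays in the natural space as long as
`p₂ + j ≤ k`; for a Lagrange generator `p₂ + max p₀ p₁ ≤ k`.
-/

noncomputable def pyramidNaturalMonomial (p₀ p₁ p₂ : ℕ) (v : refPyramid) : ℝ :=
  (v : ℝ × ℝ × ℝ).1 ^ p₀ * (v : ℝ × ℝ × ℝ).2.1 ^ p₁ * (v : ℝ × ℝ × ℝ).2.2 ^ p₂ /
    (1 - (v : ℝ × ℝ × ℝ).2.2) ^ (p₀ + p₁)

theorem pyramidNaturalMonomial_mem {k p₀ p₁ p₂ : ℕ} (h₀ : p₀ ≤ k) (h₁ : p₁ ≤ k) (h₂ : p₂ ≤ k) :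
    pyramidNaturalMonomial p₀ p₁ p₂ ∈ pyramidNatural k :=
  Submodule.subset_span ⟨p₀, p₁, p₂, h₀, h₁, h₂, rfl⟩

theorem one_sub_pow_mul_pyramidNaturalMonomial_mem {k p₀ p₁ p₂ j : ℕ} (h₀ : p₀ ≤ k)
    (h₁ : p₁ ≤ k) (h₂ : p₂ + j ≤ k) :
    (fun v : refPyramid => (1 - (v : ℝ × ℝ × ℝ).2.2) ^ j * pyramidNaturalMonomial p₀ p₁ p₂ v)
      ∈ pyramidNatural k := by
  induction j generalizing p₂ with
  | zero => simpa only [pow_zero, one_mul] using pyramidNaturalMonomial_mem h₀ h₁ (le_self_add.trans h₂)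
  | succ j ih =>
    have hsplit :
        (fun v : refPyramid =>
            (1 - (v : ℝ × ℝ × ℝ).2.2) ^ (j + 1) * pyramidNaturalMonomial p₀ p₁ p₂ v) =
          (fun v : refPyramid =>
            (1 - (v : ℝ × ℝ × ℝ).2.2) ^ j * pyramidNaturalMonomial p₀ p₁ p₂ v) -
          (fun v : refPyramid =>
            (1 - (v : ℝ × ℝ × ℝ).2.2) ^ j * pyramidNaturalMonomial p₀ p₁ (p₂ + 1) v) := by
      funext v
      simp only [Pi.sub_apply, pyramidNaturalMonomial]
      ring
    rw [hsplit]
    exact Submodule.sub_mem _ (ih (by omega)) (ih (by omega))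

theorem pyramidLagrange_generator_eq {p₀ p₁ p₂ : ℕ} (v : refPyramid) :
    (v : ℝ × ℝ × ℝ).1 ^ p₀ * (v : ℝ × ℝ × ℝ).2.1 ^ p₁ * (v : ℝ × ℝ × ℝ).2.2 ^ p₂ /
        (1 - (v : ℝ × ℝ × ℝ).2.2) ^ (min p₀ p₁) =
      (1 - (v : ℝ × ℝ × ℝ).2.2) ^ (max p₀ p₁) * pyramidNaturalMonomial p₀ p₁ p₂ v := by
  have hz : (1 : ℝ) - (v : ℝ × ℝ × ℝ).2.2 ≠ 0 := by linarith [v.2.2.2.2.1]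
  rw [pyramidNaturalMonomial, ← min_add_max p₀ p₁, pow_add]
  field_simp

theorem pyramid_lagrange_subspace_of_natural (k : ℕ) :
    pyramidLagrange k ≤ pyramidNatural k := by
  rw [pyramidLagrange, Submodule.span_le]
  rintro f ⟨p₀, p₁, p₂, h₀₂, h₁₂, rfl⟩
  simp only [pyramidLagrange_generator_eq]
  exact one_sub_pow_mul_pyramidNaturalMonomial_mem (by omega) (by omega) (by omega)
end
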